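/- Let z ∈ ℝⁿ and 1 ≤ k ≤ n. Then z is a descent vector of the ℓ¹-norm at some k-sparse point, i.e. z ∈ T_{‖·‖₁}(Σ_k), if and only if there exists a set S of at most k indices such that Σ_{i∉S} |z_i| ≤ Σ_{i∈S} |z_i|. -/

import Mathlib

noncomputable section

/-- The set of `k`-sparse vectors in `ℝⁿ`. -/
def sparse (n k : ℕ) : Set (EuclideanSpace ℝ (Fin n)) :=
  {x | ∃ S : Finset (Fin n), S.card ≤ k ∧ ∀ i ∉ S, x i = 0}

/-- Descent vectors of `R` at `x`. -/
def descentSet {H : Type*} [AddCommGroup H] (R : H → ℝ) (x : H) : Set H :=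
  {z | R (x + z) ≤ R x}

/-- Descent vectors of `R` at the model set `S`. -/
def descentCone {H : Type*} [AddCommGroup H] (R : H → ℝ) (S : Set H) : Set H :=
  ⋃ x ∈ S, descentSet R x

theorem stmt4 (n k : ℕ) (hk : 1 ≤ k) (hkn : k ≤ n) (z : EuclideanSpace ℝ (Fin n)) :
    z ∈ descentCone (fun x : EuclideanSpace ℝ (Fin n) => ∑ i, |x i|) (sparse n k) ↔
      ∃ S : Finset (Fin n), S.card ≤ k ∧ ∑ i ∈ Sᶜ, |z i| ≤ ∑ i ∈ S, |z i| := by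
  constructor
  · intro hz
    simp only [descentCone, sparse, descentSet, Set.mem_iUnion, Set.mem_setOf_eq] at hz
    obtain ⟨x, ⟨S, hS, hx0⟩, hle⟩ := hz
    refine ⟨S, hS, ?_⟩
    have h1 : (∑ i, |(x + z) i|) = ∑ i ∈ S, |x i + z i| + ∑ i ∈ Sᶜ, |z i| := by
      rw [← Finset.sum_add_sum_compl S]
      congr 1
      exact Finset.sum_congr rfl fun i hi => by
        simp [PiLp.add_apply, hx0 i (Finset.mem_compl.mp hi)]
    have h2 : (∑ i, |x i|) = ∑ i ∈ S, |x i| := by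
      rw [← Finset.sum_add_sum_compl S,
        Finset.sum_eq_zero (fun i hi => by simp [hx0 i (Finset.mem_compl.mp hi)] :
          ∀ i ∈ Sᶜ, |x i| = 0), add_zero]
    have key : ∑ i ∈ Sᶜ, |z i| ≤ ∑ i ∈ S, (|x i| - |x i + z i|) := by
      rw [Finset.sum_sub_distrib]
      have := h1 ▸ h2 ▸ hle
      linarith
    refine key.trans (Finset.sum_le_sum fun i _ => ?_)
    have := abs_sub_abs_le_abs_sub (x i) (x i + z i)
    simpa using this
  · rintro ⟨S, hS, hle⟩
    set x : EuclideanSpace ℝ (Fin n) := WithLp.toLp 2 (fun i => if i ∈ S then -z i else 0) with hx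
    have hmem : x ∈ sparse n k := ⟨S, hS, fun i hi => by simp [hx, hi]⟩
    refine Set.mem_biUnion hmem ?_
    show (∑ i, |(x + z) i|) ≤ ∑ i, |x i|
    have h1 : (∑ i, |(x + z) i|) = ∑ i ∈ Sᶜ, |z i| := by
      rw [← Finset.sum_add_sum_compl S,
        Finset.sum_eq_zero (fun i hi => by simp [PiLp.add_apply, hx, hi] :
          ∀ i ∈ S, |(x + z) i| = 0), zero_add]
      exact Finset.sum_congr rfl fun i hi => by
        simp [PiLp.add_apply, hx, Finset.mem_compl.mp hi]
    have h2 : (∑ i, |x i|) = ∑ i ∈ S, |z i| := by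
      rw [← Finset.sum_add_sum_compl S,
        Finset.sum_eq_zero (fun i hi => by simp [hx, Finset.mem_compl.mp hi] :
          ∀ i ∈ Sᶜ, |x i| = 0), add_zero]
      exact Finset.sum_congr rfl fun i hi => by simp [hx, hi]
    rw [h1, h2]; exact hle
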